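/- In a determinate labeled transition system, if a state s can produce a finite trace m₁ ++ m₂ and s can also produce the trace m₁, then there is a state s' reachable from s producing exactly m₁ along the way such that s' produces m₂. -/
import Mathlib


/-- Determinacy of a labeled transition system: non-silent steps from a state agree on
label and target, silent steps agree on target, and silent and non-silent steps are
mutually exclusive. -/
def Determinate {S E : Type} (step : S → Option E → S → Prop) : Prop :=
  (∀ s a₁ a₂ s₁ s₂, step s (some a₁) s₁ → step s (some a₂) s₂ → a₁ = a₂ ∧ s₁ = s₂) ∧
  (∀ s s₁ s₂, step s none s₁ → step s none s₂ → s₁ = s₂) ∧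
  (∀ s a s₁ s₂, step s none s₁ → step s (some a) s₂ → False)

/-- `ProducesTo step s m s'`: there is a finite sequence of steps from `s` to `s'` whose
non-silent labels form exactly `m`. -/
inductive ProducesTo {S E : Type} (step : S → Option E → S → Prop) : S → List E → S → Prop
  | nil (s : S) : ProducesTo step s [] s
  | silent {s s' s'' : S} {m : List E} :
      step s none s' → ProducesTo step s' m s'' → ProducesTo step s m s''
  | event {s s' s'' : S} {a : E} {m : List E} :
      step s (some a) s' → ProducesTo step s' m s'' → ProducesTo step s (a :: m) s''

/-- `Produces step s m`: state `s` produces the finite trace `m`. -/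
def Produces {S E : Type} (step : S → Option E → S → Prop) (s : S) (m : List E) : Prop :=
  ∃ s', ProducesTo step s m s'

lemma produces_silent {S E : Type} {step : S → Option E → S → Prop}
    (hdet : Determinate step) {s t : S} {m : List E}
    (hs : step s none t) (h : Produces step s m) : Produces step t m := by
  obtain ⟨r, hr⟩ := h
  cases hr with
  | nil => exact ⟨t, ProducesTo.nil t⟩
  | silent h1 h2 =>
    obtain rfl := hdet.2.1 _ _ _ hs h1
    exact ⟨r, h2⟩
  | event h1 h2 => exact absurd (hdet.2.2 _ _ _ _ hs h1) (fun h => h)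

lemma produces_event {S E : Type} {step : S → Option E → S → Prop}
    (hdet : Determinate step) {s t : S} {a : E} {m : List E}
    (hs : step s (some a) t) (h : Produces step s (a :: m)) : Produces step t m := by
  obtain ⟨r, hr⟩ := h
  cases hr with
  | silent h1 h2 => exact absurd (hdet.2.2 _ _ _ _ h1 hs) (fun h => h)
  | event h1 h2 =>
    obtain ⟨-, rfl⟩ := hdet.1 _ _ _ _ _ hs h1
    exact ⟨r, h2⟩

/-- In a determinate LTS, if `s` produces `m₁ ++ m₂` and `s` also produces `m₁`, then
there is a state `s'` reachable from `s` producing exactly `m₁` along the way such that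
`s'` produces `m₂`. -/
theorem determinate_split {S E : Type} (step : S → Option E → S → Prop)
    (hdet : Determinate step) (s : S) (m₁ m₂ : List E)
    (h₁ : Produces step s (m₁ ++ m₂)) (h₂ : Produces step s m₁) :
    ∃ s', ProducesTo step s m₁ s' ∧ Produces step s' m₂ := by
  obtain ⟨u, hu⟩ := h₂
  revert h₁
  induction hu with
  | nil s => exact fun h₁ => ⟨s, ProducesTo.nil s, h₁⟩
  | silent h1 h2 ih =>
    intro h₁
    obtain ⟨s', hs', hp⟩ := ih (produces_silent hdet h1 h₁)
    exact ⟨s', ProducesTo.silent h1 hs', hp⟩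
  | event h1 h2 ih =>
    intro h₁
    obtain ⟨s', hs', hp⟩ := ih (produces_event hdet h1 h₁)
    exact ⟨s', ProducesTo.event h1 hs', hp⟩
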